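/- For every q ∈ ℚ∞ and every x in the quaternion group H, one has ⟨v_q^x, v_q^x⟩ = 1 and v_q^x is positive (i.e. rk(v_q^x) > 0, or rk(v_q^x) = 0 and deg(v_q^x) > 0). -/
import Mathlib


open Matrix

abbrev V6 := Fin 6 → ℤ

def C6 : Matrix (Fin 6) (Fin 6) ℤ :=
  !![1,0,-1,-1,1,1;
     0,1,-1,-1,1,1;
     0,0,1,0,-1,-1;
     0,0,0,1,-1,-1;
     0,0,0,0,1,0;
     0,0,0,0,0,1]

/-- The bilinear form `⟨x,y⟩ = xᵀ C y` on `ℤ^6`. -/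
def form (x y : V6) : ℤ := x ⬝ᵥ C6.mulVec y

/-- The quaternion `i`. -/
def qI : Quaternion ℤ := ⟨0,1,0,0⟩
/-- The quaternion `j`. -/
def qJ : Quaternion ℤ := ⟨0,0,1,0⟩
/-- The quaternion `k`. -/
def qK : Quaternion ℤ := ⟨0,0,0,1⟩

instance : DecidableEq (Quaternion ℤ) := fun x y =>
  decidable_of_iff (x.re = y.re ∧ x.imI = y.imI ∧ x.imJ = y.imJ ∧ x.imK = y.imK)
    ⟨fun ⟨h1, h2, h3, h4⟩ => QuaternionAlgebra.ext h1 h2 h3 h4,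
     fun h => by subst h; exact ⟨rfl, rfl, rfl, rfl⟩⟩

/-- The quaternion group `H = {±1, ±i, ±j, ±k}`. -/
def Hset : Finset (Quaternion ℤ) := {1, -1, qI, -qI, qJ, -qJ, qK, -qK}

/-- The subset `H⁺ = {1, i, j, k}`. -/
def Hplus : Finset (Quaternion ℤ) := {1, qI, qJ, qK}

/-- Index type for the three special slopes `0`, `1`, `∞`. -/
inductive Ty | zero | one | inf
deriving DecidableEq

def h0 : V6 := ![0,0,1,1,1,1]
def h1 : V6 := ![1,1,2,2,1,1]
def hinf : V6 := ![1,1,1,1,0,0]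

def hTy : Ty → V6
  | .zero => h0
  | .one => h1
  | .inf => hinf

/-- The vectors `v_t^x` for `t ∈ {0,1,∞}` and `x ∈ H⁺`. -/
def vposTy : Ty → Quaternion ℤ → V6
  | .zero, x => if x = 1 then ![0,0,1,0,1,0] else if x = qI then ![-1,0,0,0,0,0]
      else if x = qJ then ![0,0,1,0,0,1] else ![0,1,1,1,1,1]
  | .one, x => if x = 1 then ![1,0,1,1,1,0] else if x = qI then ![0,1,1,1,1,0]
      else if x = qJ then ![0,0,1,0,0,0] else ![1,1,2,1,1,1]
  | .inf, x => if x = 1 then ![1,0,0,1,0,0] else if x = qI then ![1,1,1,1,1,0]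
      else if x = qJ then ![0,0,0,0,0,-1] else ![1,0,1,0,0,0]

/-- The vectors `v_t^x` for `t ∈ {0,1,∞}` and `x ∈ H`, with `v_t^{-x} = h_t - v_t^x`. -/
def vTy (t : Ty) (x : Quaternion ℤ) : V6 :=
  if x ∈ Hplus then vposTy t x else hTy t - vposTy t (-x)

/-- `a(q)`: numerator, with `a(∞) = 1`. -/
def aQ : WithTop ℚ → ℤ := WithTop.recTopCoe 1 Rat.num

/-- `b(q)`: denominator, with `b(∞) = 0`. -/
def bQ : WithTop ℚ → ℤ := WithTop.recTopCoe 0 (fun x => (x.den : ℤ))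

/-- The type `t(q) ∈ {0,1,∞}` of a slope `q`. -/
def tyQ (q : WithTop ℚ) : Ty :=
  if aQ q % 2 = 0 then Ty.zero else if bQ q % 2 = 1 then Ty.one else Ty.inf

/-- `⌊n⌋₂ = n/2` for even `n` and `(n-1)/2` for odd `n`. -/
def half2 (n : ℤ) : ℤ := if Even n then n / 2 else (n - 1) / 2

/-- `h_q = b(q)·h₀ + a(q)·h_∞`. -/
def hQ (q : WithTop ℚ) : V6 := bQ q • h0 + aQ q • hinf

/-- `v_q^x = v_{t(q)}^x + ⌊b(q)⌋₂·h₀ + ⌊a(q)⌋₂·h_∞`. -/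
def vQ (q : WithTop ℚ) (x : Quaternion ℤ) : V6 :=
  vTy (tyQ q) x + half2 (bQ q) • h0 + half2 (aQ q) • hinf

/-- `rk e = ⟨e, h_∞⟩`. -/
def rk (e : V6) : ℤ := form e hinf

/-- `deg e = ⟨h₀, e⟩`. -/
def degV (e : V6) : ℤ := form h0 e

/-- `e` is positive if `rk e > 0`, or `rk e = 0` and `deg e > 0`. -/
def PosV (e : V6) : Prop := 0 < rk e ∨ (rk e = 0 ∧ 0 < degV e)

/-- `d(p,q) = |a(q)b(p) - a(p)b(q)|`. -/
def dQ (p q : WithTop ℚ) : ℤ := |aQ q * bQ p - aQ p * bQ q|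

/-- Complexity `c(p) = |a(p)| + |b(p)| + |a(p)+b(p)|`. -/
def cpx (p : WithTop ℚ) : ℤ := |aQ p| + |bQ p| + |aQ p + bQ p|


lemma cons_val_five' {m : ℕ} {α : Type*} (x : α) (u : Fin (m + 5) → α) :
    vecCons x u 5 = vecHead (vecTail (vecTail (vecTail (vecTail u)))) := rfl

lemma form_apply (x y : V6) : form x y =
    x 0 * (y 0 - y 2 - y 3 + y 4 + y 5) + x 1 * (y 1 - y 2 - y 3 + y 4 + y 5)
      + x 2 * (y 2 - y 4 - y 5) + x 3 * (y 3 - y 4 - y 5) + x 4 * y 4 + x 5 * y 5 := by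
  simp [form, C6, Matrix.mulVec, dotProduct, Fin.sum_univ_six, Matrix.cons_val_zero,
    Matrix.cons_val_one, Matrix.cons_val_two, Matrix.cons_val_three, Matrix.cons_val_four,
    cons_val_five', Matrix.head_cons, Matrix.vecHead, Matrix.vecTail, Function.comp]
  ring
lemma consts (t : Ty) (x : Quaternion ℤ) (hx : x ∈ Hset) :
    form (vTy t x) (vTy t x) = 1 ∧
    form (vTy t x) h0 + form h0 (vTy t x) = 0 ∧
    form (vTy t x) hinf + form hinf (vTy t x) = 0 ∧
    form (vTy t x) hinf = (if t = Ty.inf then 0 else 1) ∧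
    form h0 (vTy t x) = (if t = Ty.zero then 0 else 1) := by
  simp only [Hset, Finset.mem_insert, Finset.mem_singleton] at hx
  rcases hx with rfl|rfl|rfl|rfl|rfl|rfl|rfl|rfl <;> cases t <;> decide

lemma comp_h0 : h0 0 = 0 ∧ h0 1 = 0 ∧ h0 2 = 1 ∧ h0 3 = 1 ∧ h0 4 = 1 ∧ h0 5 = 1 := by decide
lemma comp_hinf : hinf 0 = 1 ∧ hinf 1 = 1 ∧ hinf 2 = 1 ∧ hinf 3 = 1 ∧ hinf 4 = 0 ∧ hinf 5 = 0 := by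
  decide

lemma quad (v : V6) (α β : ℤ)
    (k1 : form v v = 1) (k2 : form v h0 + form h0 v = 0)
    (k3 : form v hinf + form hinf v = 0) :
    form (v + β • h0 + α • hinf) (v + β • h0 + α • hinf) = 1 := by
  obtain ⟨a0, a1, a2, a3, a4, a5⟩ := comp_h0
  obtain ⟨b0, b1, b2, b3, b4, b5⟩ := comp_hinf
  simp only [form_apply, Pi.add_apply, Pi.smul_apply, smul_eq_mul,
    a0, a1, a2, a3, a4, a5, b0, b1, b2, b3, b4, b5] at k1 k2 k3 ⊢
  linear_combination k1 + β * k2 + α * k3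

lemma rkL (v : V6) (α β c : ℤ) (h : form v hinf = c) :
    form (v + β • h0 + α • hinf) hinf = c + 2 * β := by
  obtain ⟨a0, a1, a2, a3, a4, a5⟩ := comp_h0
  obtain ⟨b0, b1, b2, b3, b4, b5⟩ := comp_hinf
  simp only [form_apply, Pi.add_apply, Pi.smul_apply, smul_eq_mul,
    a0, a1, a2, a3, a4, a5, b0, b1, b2, b3, b4, b5] at h ⊢
  linear_combination h

lemma degL (v : V6) (α β c : ℤ) (h : form h0 v = c) :
    form h0 (v + β • h0 + α • hinf) = c + 2 * α := by
  obtain ⟨a0, a1, a2, a3, a4, a5⟩ := comp_h0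
  obtain ⟨b0, b1, b2, b3, b4, b5⟩ := comp_hinf
  simp only [form_apply, Pi.add_apply, Pi.smul_apply, smul_eq_mul,
    a0, a1, a2, a3, a4, a5, b0, b1, b2, b3, b4, b5] at h ⊢
  linear_combination h

lemma half2_eq (n : ℤ) : 2 * half2 n = n - n % 2 := by
  rw [half2]; split_ifs with h <;> rw [Int.even_iff] at h <;> omega


theorem stmt6 (q : WithTop ℚ) (x : Quaternion ℤ) (hx : x ∈ Hset) :
    form (vQ q x) (vQ q x) = 1 ∧ PosV (vQ q x) := by
  obtain ⟨k1, k2, k3, k4, k5⟩ := consts (tyQ q) x hx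
  have hform : form (vQ q x) (vQ q x) = 1 := quad _ _ _ k1 k2 k3
  have hrk : form (vQ q x) hinf = (if tyQ q = Ty.inf then 0 else 1) + 2 * half2 (bQ q) :=
    rkL _ _ _ _ k4
  have hdeg : form h0 (vQ q x) = (if tyQ q = Ty.zero then 0 else 1) + 2 * half2 (aQ q) :=
    degL _ _ _ _ k5
  refine ⟨hform, ?_⟩
  have h2b := half2_eq (bQ q)
  have h2a := half2_eq (aQ q)
  unfold PosV rk degV
  induction q using WithTop.recTopCoe with
  | top =>
    have ha : aQ ⊤ = 1 := rfl
    have hb : bQ ⊤ = 0 := rfl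
    have ht : tyQ ⊤ = Ty.inf := by rw [tyQ, ha, hb]; norm_num
    rw [ht, if_pos rfl, hb] at hrk
    rw [ht, show (if Ty.inf = Ty.zero then (0:ℤ) else 1) = 1 from rfl, ha] at hdeg
    rw [ha] at h2a
    rw [hb] at h2b
    right
    omega
  | coe r =>
    have ha : aQ ↑r = r.num := rfl
    have hb : bQ ↑r = (r.den : ℤ) := rfl
    have hbpos : 0 < bQ ↑r := by rw [hb]; exact_mod_cast r.pos
    left
    rw [hrk]
    by_cases hodd : bQ ↑r % 2 = 1
    · have ht : ¬ tyQ ↑r = Ty.inf := by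
        rw [tyQ]
        rcases eq_or_ne (aQ ↑r % 2) 0 with h | h
        · rw [if_pos h]; decide
        · rw [if_neg h, if_pos hodd]; decide
      rw [if_neg ht]
      omega
    · have hbe : bQ ↑r % 2 = 0 := by omega
      have hao : ¬ aQ ↑r % 2 = 0 := by
        intro hae
        have d1 : (2 : ℤ) ∣ r.num := Int.dvd_of_emod_eq_zero (by rw [← ha]; exact hae)
        have d2 : (2 : ℕ) ∣ r.den := by
          have : (2 : ℤ) ∣ (r.den : ℤ) := Int.dvd_of_emod_eq_zero (by rw [← hb]; exact hbe)
          exact_mod_cast this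
        have d1' : (2 : ℕ) ∣ r.num.natAbs := Int.natAbs_dvd_natAbs.mpr d1
        have hd := Nat.dvd_gcd d1' d2
        rw [r.reduced] at hd
        exact absurd hd (by norm_num)
      have ht : tyQ ↑r = Ty.inf := by rw [tyQ, if_neg hao, if_neg (by omega)]
      rw [ht, if_pos rfl]
      omega
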